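/- Let σ > 0 and n ≥ 1 a natural number. Then the tail sum satisfies (2/(√(2π)σ))·∑_{k=n}^{∞} exp(-(2kπ)²/(2σ²)) ≤ (1 - erf(π√2(n-1)/σ))/(2π). -/

import Mathlib

/-! With `s = π√2/σ` the summands are `exp (-(s (n + k))²)`. Since `x ↦ exp (-(s x)²)` decreases on
`[n - 1, ∞)`, each summand is at most the integral over `[n - 1 + k, n + k]`, so the tail sum is at
most `∫_{n-1}^∞ exp (-(s x)²) dx = √π / (2s) · (1 - erf (s (n - 1)))`. -/

noncomputable def erf (x : ℝ) : ℝ :=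
  (2 / Real.sqrt Real.pi) * ∫ t in (0:ℝ)..x, Real.exp (-t^2)

open Set MeasureTheory Real

theorem integrable_exp_neg_sq : Integrable fun x : ℝ => exp (-x ^ 2) := by
  simpa using integrable_exp_neg_mul_sq one_pos

theorem integral_Ioi_exp_neg_sq (a : ℝ) :
    ∫ x in Ioi a, exp (-x ^ 2) = √π / 2 * (1 - erf a) := by
  have hsplit := intervalIntegral.integral_Ioi_sub_Ioi' (integrable_exp_neg_sq.integrableOn (s := Ioi 0))
    integrable_exp_neg_sq.integrableOn (b := a)
  have h0 : ∫ x in Ioi (0 : ℝ), exp (-x ^ 2) = √π / 2 := by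
    simpa using integral_gaussian_Ioi 1
  rw [erf, ← hsplit, h0]
  field_simp
  ring

theorem integral_Ioi_exp_neg_mul_sq {s : ℝ} (hs : 0 < s) (a : ℝ) :
    ∫ x in Ioi a, exp (-(s * x) ^ 2) = √π / (2 * s) * (1 - erf (s * a)) := by
  rw [integral_comp_mul_left_Ioi (fun x => exp (-x ^ 2)) a hs, integral_Ioi_exp_neg_sq,
    smul_eq_mul]
  field_simp

theorem antitoneOn_exp_neg_mul_sq (s : ℝ) : AntitoneOn (fun x => exp (-(s * x) ^ 2)) (Ici 0) := by
  intro x hx y _ hxy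
  simp only [mul_pow, exp_le_exp, neg_le_neg_iff]
  have : x ^ 2 ≤ y ^ 2 := pow_le_pow_left₀ hx hxy 2
  gcongr

theorem AntitoneOn.tsum_le_integral_Ioi {f : ℝ → ℝ} {a : ℝ} (hf : AntitoneOn f (Ici a))
    (hf0 : ∀ x ∈ Ioi a, 0 ≤ f x) (hfi : IntegrableOn f (Ioi a)) :
    ∑' k : ℕ, f (a + (k + 1)) ≤ ∫ x in Ioi a, f x := by
  refine Real.tsum_le_of_sum_range_le (fun k => hf0 _ (by simp; positivity)) fun N => ?_
  calc ∑ k ∈ Finset.range N, f (a + (k + 1))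
      ≤ ∫ x in a..a + N, f x := by
        simpa using (hf.mono Icc_subset_Ici_self).sum_le_integral (a := N)
    _ = ∫ x in Ioc a (a + N), f x := intervalIntegral.integral_of_le (by simp)
    _ ≤ ∫ x in Ioi a, f x :=
        setIntegral_mono_set hfi ((ae_restrict_iff' measurableSet_Ioi).2 (.of_forall hf0))
          Ioc_subset_Ioi_self.eventuallyLE

theorem gaussian_tail_sum_bound (σ : ℝ) (n : ℕ) (hσ : 0 < σ) (hn : 1 ≤ n) :
    (2 / (Real.sqrt (2 * Real.pi) * σ)) *
        ∑' k : ℕ, Real.exp (-(2 * ((n:ℝ) + k) * Real.pi)^2 / (2 * σ^2)) ≤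
      (1 - erf (Real.pi * Real.sqrt 2 * ((n:ℝ) - 1) / σ)) / (2 * Real.pi) := by
  set s := π * √2 / σ with hs_def
  set a := (n : ℝ) - 1 with ha_def
  have hs : 0 < s := by positivity
  have ha : 0 ≤ a := sub_nonneg.2 (by exact_mod_cast hn)
  have hterm (k : ℕ) : exp (-(2 * ((n : ℝ) + k) * π) ^ 2 / (2 * σ ^ 2))
      = exp (-(s * (a + (k + 1))) ^ 2) := by
    rw [hs_def, ha_def]
    simp only [mul_pow, div_pow, sq_sqrt zero_le_two]
    congr 1
    field_simp
    ring
  have hsum := AntitoneOn.tsum_le_integral_Ioi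
    ((antitoneOn_exp_neg_mul_sq s).mono (Ici_subset_Ici.2 ha)) (fun x _ => (exp_pos _).le)
    (by simpa [mul_pow] using (integrable_exp_neg_mul_sq (pow_pos hs 2)).integrableOn)
  rw [integral_Ioi_exp_neg_mul_sq hs] at hsum
  have hconst : 2 / (√(2 * π) * σ) * (√π / (2 * s)) = 1 / (2 * π) := by
    rw [hs_def, sqrt_mul zero_le_two]
    field_simp
    rw [sq_sqrt zero_le_two]
  calc 2 / (√(2 * π) * σ) * ∑' k : ℕ, exp (-(2 * ((n : ℝ) + k) * π) ^ 2 / (2 * σ ^ 2))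
      = 2 / (√(2 * π) * σ) * ∑' k : ℕ, exp (-(s * (a + (k + 1))) ^ 2) := by simp_rw [hterm]
    _ ≤ 2 / (√(2 * π) * σ) * (√π / (2 * s) * (1 - erf (s * a))) := by gcongr
    _ = (1 - erf (π * √2 * ((n : ℝ) - 1) / σ)) / (2 * π) := by
        rw [← mul_assoc, hconst, one_div_mul_eq_div, hs_def, ha_def, div_mul_eq_mul_div]
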